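/- If H_v is a supporting hyperplane of the moment cone S_A (with normal vector v such that ⟨v, s_A(x)⟩ ≥ 0 for all x ∈ X), then the intersection S_A ∩ H_v equals the moment cone of the restriction of A to the zero set Z = {x ∈ X : ⟨v, s_A(x)⟩ = 0}, and dim(S_A ∩ H_v) < dim S_A. -/

import Mathlib

/-!
A measure representing a point of `S_A ∩ H_v` integrates the nonnegative function
`⟨v, s_A⟩` to zero, so it is concentrated on `Z`; such measures are exactly the push-forwards
of measures on `Z`. For the dimension, `span (S_A ∩ H_v)` lies in `H_v`, whereas linear
independence of `A` puts some point `s_A(x)` of the moment curve (the moments of `δ_x`) off `H_v`.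
-/

open MeasureTheory

section MomentCone

variable {X ι : Type*} [MeasurableSpace X]

def IsRepresentingMeasure (a : ι → X → ℝ) (s : ι → ℝ) (μ : Measure X) : Prop :=
  (∀ i, Integrable (a i) μ) ∧ ∀ i, s i = ∫ x, a i x ∂μ

def momentCone (a : ι → X → ℝ) : Set (ι → ℝ) :=
  {s | ∃ μ, IsRepresentingMeasure a s μ}

variable {a : ι → X → ℝ}

theorem isRepresentingMeasure_dirac (ha : ∀ i, Measurable (a i)) (x : X) :
    IsRepresentingMeasure a (fun i => a i x) (Measure.dirac x) :=
  ⟨fun i => integrable_dirac' (ha i).stronglyMeasurable enorm_lt_top,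
    fun i => (integral_dirac' _ _ (ha i).stronglyMeasurable).symm⟩

theorem IsRepresentingMeasure.integral_sum_mul [Fintype ι] {s : ι → ℝ} {μ : Measure X}
    (h : IsRepresentingMeasure a s μ) (v : ι → ℝ) :
    ∫ x, ∑ i, v i * a i x ∂μ = ∑ i, v i * s i := by
  rw [integral_finsetSum _ fun i _ => (h.1 i).const_mul (v i)]
  simp only [integral_const_mul, h.2]

theorem MeasurableEmbedding.momentCone_comp {Y : Type*} [MeasurableSpace Y] {f : Y → X}
    (hf : MeasurableEmbedding f) :
    momentCone (fun i => a i ∘ f) =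
      {s | ∃ μ, (∀ᵐ x ∂μ, x ∈ Set.range f) ∧ IsRepresentingMeasure a s μ} := by
  ext s
  constructor
  · rintro ⟨ν, hint, hs⟩
    refine ⟨ν.map f, hf.ae_map_iff.mpr (ae_of_all _ fun y => ⟨y, rfl⟩),
      fun i => hf.integrable_map_iff.mpr (hint i), fun i => ?_⟩
    rw [hf.integral_map]
    exact hs i
  · rintro ⟨μ, hrange, hint, hs⟩
    have hmap : (μ.comap f).map f = μ := by
      rw [hf.map_comap, Measure.restrict_eq_self_of_ae_mem hrange]
    refine ⟨μ.comap f, fun i => ?_, fun i => ?_⟩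
    · rw [← hf.integrable_map_iff, hmap]
      exact hint i
    · change s i = ∫ y, a i (f y) ∂μ.comap f
      rw [← hf.integral_map, hmap]
      exact hs i

theorem momentCone_inter_hyperplane [Fintype ι] {v : ι → ℝ}
    (hsupp : ∀ x, 0 ≤ ∑ i, v i * a i x) :
    momentCone a ∩ {s | ∑ i, v i * s i = 0} =
      {s | ∃ μ, (∀ᵐ x ∂μ, ∑ i, v i * a i x = 0) ∧ IsRepresentingMeasure a s μ} := by
  ext s
  constructor
  · rintro ⟨⟨μ, hμ⟩, hs : ∑ i, v i * s i = 0⟩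
    have hint : Integrable (fun x => ∑ i, v i * a i x) μ :=
      integrable_finsetSum _ fun i _ => (hμ.1 i).const_mul (v i)
    refine ⟨μ, ?_, hμ⟩
    rw [← hμ.integral_sum_mul] at hs
    exact (integral_eq_zero_iff_of_nonneg hsupp hint).mp hs
  · rintro ⟨μ, hzero, hμ⟩
    refine ⟨⟨μ, hμ⟩, ?_⟩
    change ∑ i, v i * s i = 0
    rw [← hμ.integral_sum_mul, integral_eq_zero_of_ae hzero]

end MomentCone

theorem LinearIndependent.exists_sum_mul_ne_zero {K X ι : Type*} [Field K] [Fintype ι]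
    {a : ι → X → K} (h : LinearIndependent K a) {v : ι → K} (hv : v ≠ 0) :
    ∃ x, ∑ i, v i * a i x ≠ 0 := by
  by_contra! hzero
  exact hv (funext (Fintype.linearIndependent_iff.mp h v (funext fun x => by simpa using hzero x)))

theorem Submodule.finrank_span_inter_lt {K V : Type*} [DivisionRing K] [AddCommGroup V]
    [Module K V] [FiniteDimensional K V] {S : Set V} {H : Submodule K V} {s : V}
    (hs : s ∈ S) (hsH : s ∉ H) :
    Module.finrank K (span K (S ∩ H)) < Module.finrank K (span K S) := by
  refine Submodule.finrank_lt_finrank_of_lt (lt_of_le_of_ne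
    (span_mono Set.inter_subset_left) fun heq => hsH ?_)
  have hs' : s ∈ span K (S ∩ H) := heq ▸ subset_span hs
  exact span_le.mpr Set.inter_subset_right hs'

/-- If `H_v` is a supporting hyperplane of the moment cone `S_A` (with normal
vector `v` satisfying `⟨v, s_A(x)⟩ ≥ 0` for all `x ∈ X`), then `S_A ∩ H_v` is
the moment cone of the restriction of `A` to the zero set
`Z = {x : ⟨v, s_A(x)⟩ = 0}`, and `dim (S_A ∩ H_v) < dim S_A`. -/
theorem moment_cone_supporting_hyperplane {X : Type*} [MeasurableSpace X] {m : ℕ}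
    (a : Fin m → X → ℝ) (ha : ∀ i, Measurable (a i))
    (hindep : LinearIndependent ℝ a) (v : Fin m → ℝ) (hv : v ≠ 0)
    (hsupp : ∀ x : X, 0 ≤ ∑ i, v i * a i x) :
    let S : Set (Fin m → ℝ) := {s | ∃ μ : Measure X,
      (∀ i, Integrable (a i) μ) ∧ ∀ i, s i = ∫ x, a i x ∂μ}
    let Z : Set X := {x | ∑ i, v i * a i x = 0}
    let SZ : Set (Fin m → ℝ) := {s | ∃ μ : Measure Z,
      (∀ i, Integrable (fun z : Z => a i z.1) μ) ∧
        ∀ i, s i = ∫ z, a i (z : X) ∂μ}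
    S ∩ {s | ∑ i, v i * s i = 0} = SZ ∧
      Module.finrank ℝ (Submodule.span ℝ (S ∩ {s | ∑ i, v i * s i = 0})) <
        Module.finrank ℝ (Submodule.span ℝ S) := by
  intro S Z SZ
  have hZ : MeasurableSet Z := measurableSet_eq_fun (by fun_prop) measurable_const
  refine ⟨?_, ?_⟩
  · change momentCone a ∩ _ = momentCone fun i => a i ∘ ((↑) : Z → X)
    rw [momentCone_inter_hyperplane hsupp, (MeasurableEmbedding.subtype_coe hZ).momentCone_comp,
      Subtype.range_coe]
    rfl
  · obtain ⟨x, hx⟩ := hindep.exists_sum_mul_ne_zero hv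
    exact Submodule.finrank_span_inter_lt (H := LinearMap.ker (dotProductBilin ℝ ℝ v))
      ⟨Measure.dirac x, isRepresentingMeasure_dirac ha x⟩ hx
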